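/- Let L be a Lie superalgebra over k, z ∈ Z(L) a central element of degree 0, and α ∈ k. Then the map φ(x⊗y) = α[x,y]⊗z + (−1)^{|x||y|} y⊗x (on homogeneous x, y) satisfies the braid equation φ¹²φ²³φ¹² = φ²³φ¹²φ²³ and is invertible with inverse φ⁻¹(x⊗y) = α z⊗[x,y] + (−1)^{|x||y|} y⊗x. -/

import Mathlib

open TensorProduct LinearMap

noncomputable section

variable {k : Type*} [Field k]

/-- `R ⊗ I` acting on the first two factors of `V ⊗ (V ⊗ V)`. -/
def leg12 {V : Type*} [AddCommGroup V] [Module k V]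
    (R : V ⊗[k] V →ₗ[k] V ⊗[k] V) :
    V ⊗[k] (V ⊗[k] V) →ₗ[k] V ⊗[k] (V ⊗[k] V) :=
  (TensorProduct.assoc k V V V).toLinearMap ∘ₗ R.rTensor V ∘ₗ
    (TensorProduct.assoc k V V V).symm.toLinearMap

/-- `I ⊗ R` acting on the last two factors. -/
def leg23 {V : Type*} [AddCommGroup V] [Module k V]
    (R : V ⊗[k] V →ₗ[k] V ⊗[k] V) :
    V ⊗[k] (V ⊗[k] V) →ₗ[k] V ⊗[k] (V ⊗[k] V) :=
  R.lTensor V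

/-- `R¹³ = (I⊗τ)(R⊗I)(I⊗τ)`. -/
def leg13 {V : Type*} [AddCommGroup V] [Module k V]
    (R : V ⊗[k] V →ₗ[k] V ⊗[k] V) :
    V ⊗[k] (V ⊗[k] V) →ₗ[k] V ⊗[k] (V ⊗[k] V) :=
  ((TensorProduct.comm k V V).toLinearMap.lTensor V) ∘ₗ leg12 R ∘ₗ
    ((TensorProduct.comm k V V).toLinearMap.lTensor V)

/-! Since `z` is even and central, super-antisymmetry also gives `[x, z] = 0`, so `φ` acts on
`z ⊗ y` and `x ⊗ z` as the plain flip. Expanding both sides of the braid relation on a homogeneous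
`x ⊗ y ⊗ t` gives six terms each: the `α²`-terms agree by the Jacobi identity in derivation form
`[x, [y, t]] = [[x, y], t] + (-1)^{|x||y|} [y, [x, t]]`, and the rest agree because the sign
`(-1)^{|a||b|}` is bimultiplicative and squares to `1`. In `ψ ∘ φ` and `φ ∘ ψ` the `α`-terms cancel
by super-antisymmetry. Homogeneous elements span `L`, so these computations on homogeneous pure
tensors determine the maps. -/

section Sign

variable {R : Type*} [Ring R]

theorem neg_one_pow_mul_self (n : ℕ) : (-1 : R) ^ n * (-1) ^ n = 1 := by
  rw [← pow_add, Even.neg_one_pow ⟨n, rfl⟩]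

theorem neg_one_pow_val_add_mul (i j l : ZMod 2) :
    (-1 : R) ^ ((i + j).val * l.val) = (-1) ^ (i.val * l.val) * (-1) ^ (j.val * l.val) := by
  rw [← pow_add, neg_one_pow_eq_pow_mod_two, neg_one_pow_eq_pow_mod_two (n := _ + _)]
  congr 1
  revert i j l
  decide

theorem neg_one_pow_mul_val_add (i j l : ZMod 2) :
    (-1 : R) ^ (i.val * (j + l).val) = (-1) ^ (i.val * j.val) * (-1) ^ (i.val * l.val) := by
  rw [Nat.mul_comm, neg_one_pow_val_add_mul, Nat.mul_comm, Nat.mul_comm l.val]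

end Sign

section Legs

variable {V : Type*} [AddCommGroup V] [Module k V] (R : V ⊗[k] V →ₗ[k] V ⊗[k] V)

@[simp]
theorem leg12_tmul (a b c : V) :
    leg12 R (a ⊗ₜ (b ⊗ₜ c)) = TensorProduct.assoc k V V V (R (a ⊗ₜ b) ⊗ₜ c) := by
  simp [leg12]

@[simp]
theorem leg23_tmul (a b c : V) : leg23 R (a ⊗ₜ (b ⊗ₜ c)) = a ⊗ₜ R (b ⊗ₜ c) := rfl

end Legs

section Homogeneous

variable {R M N P : Type*} [CommRing R] [AddCommGroup M] [Module R M] [AddCommGroup N]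
  [Module R N] [AddCommGroup P] [Module R P] {ι κ : Type*}

theorem TensorProduct.ext_of_iSup_eq_top {G : ι → Submodule R M} {H : κ → Submodule R N}
    (hG : iSup G = ⊤) (hH : iSup H = ⊤) {f g : M ⊗[R] N →ₗ[R] P}
    (h : ∀ i j, ∀ x ∈ G i, ∀ y ∈ H j, f (x ⊗ₜ y) = g (x ⊗ₜ y)) : f = g := by
  refine TensorProduct.ext <| ext_on ((Submodule.iSup_eq_span G).symm.trans hG) fun x hx =>
    ext_on ((Submodule.iSup_eq_span H).symm.trans hH) fun y hy => ?_
  obtain ⟨i, hx⟩ := Set.mem_iUnion.1 hx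
  obtain ⟨j, hy⟩ := Set.mem_iUnion.1 hy
  exact h i j x hx y hy

theorem TensorProduct.ext_threefold_of_iSup_eq_top {G : ι → Submodule R M} (hG : iSup G = ⊤)
    {f g : M ⊗[R] (M ⊗[R] M) →ₗ[R] P}
    (h : ∀ i j l, ∀ x ∈ G i, ∀ y ∈ G j, ∀ t ∈ G l, f (x ⊗ₜ (y ⊗ₜ t)) = g (x ⊗ₜ (y ⊗ₜ t))) :
    f = g := by
  refine TensorProduct.ext <| ext_on ((Submodule.iSup_eq_span G).symm.trans hG) fun x hx => ?_
  obtain ⟨i, hx⟩ := Set.mem_iUnion.1 hx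
  exact TensorProduct.ext_of_iSup_eq_top hG hG fun j l y hy t ht => h i j l x hx y hy t ht

end Homogeneous

structure IsLieSuperBracket {L : Type*} [AddCommGroup L] [Module k L]
    (G : ZMod 2 → Submodule k L) (br : L →ₗ[k] L →ₗ[k] L) : Prop where
  bracket_mem : ∀ i j : ZMod 2, ∀ x ∈ G i, ∀ y ∈ G j, br x y ∈ G (i + j)
  antisymm : ∀ i j : ZMod 2, ∀ x ∈ G i, ∀ y ∈ G j,
    br x y = -(((-1 : k) ^ (i.val * j.val)) • br y x)
  jacobi : ∀ i j l : ZMod 2, ∀ x ∈ G i, ∀ y ∈ G j, ∀ t ∈ G l,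
    ((-1 : k) ^ (l.val * i.val)) • br x (br y t) +
    ((-1 : k) ^ (i.val * j.val)) • br y (br t x) +
    ((-1 : k) ^ (j.val * l.val)) • br t (br x y) = 0

namespace IsLieSuperBracket

variable {L : Type*} [AddCommGroup L] [Module k L] {G : ZMod 2 → Submodule k L}
  {br : L →ₗ[k] L →ₗ[k] L}

theorem bracket_bracket (h : IsLieSuperBracket G br) {i j l : ZMod 2} {x y t : L}
    (hx : x ∈ G i) (hy : y ∈ G j) (ht : t ∈ G l) :
    br x (br y t) = br (br x y) t + ((-1 : k) ^ (i.val * j.val)) • br y (br x t) := by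
  have J := h.jacobi i j l x hx y hy t ht
  rw [h.antisymm l i t ht x hx, h.antisymm l (i + j) t ht _ (h.bracket_mem i j x hx y hy),
    neg_one_pow_mul_val_add, Nat.mul_comm l.val j.val] at J
  simp only [map_neg, map_smul, smul_neg, smul_smul] at J
  rw [mul_left_comm _ ((-1 : k) ^ (l.val * i.val)), neg_one_pow_mul_self, mul_one] at J
  -- multiply by `(-1) ^ (|t| |x|)`, whose square is `1`
  linear_combination (norm := module) ((-1 : k) ^ (l.val * i.val)) • J -
    neg_one_pow_mul_self (R := k) (l.val * i.val) •
      (br x (br y t) - br (br x y) t - ((-1 : k) ^ (i.val * j.val)) • br y (br x t))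

theorem bracket_eq_zero_of_central (h : IsLieSuperBracket G br) {d i : ZMod 2} {z x : L}
    (hz : z ∈ G d) (hzc : ∀ w : L, br z w = 0) (hx : x ∈ G i) : br x z = 0 := by
  rw [h.antisymm i d x hx z hz, hzc, smul_zero, neg_zero]

end IsLieSuperBracket

section Braiding

variable {L : Type*} [AddCommGroup L] [Module k L] {G : ZMod 2 → Submodule k L}
  {br : L →ₗ[k] L →ₗ[k] L} {z : L} {α : k} {φ ψ : L ⊗[k] L →ₗ[k] L ⊗[k] L}

theorem apply_central_tmul (hz0 : z ∈ G 0) (hzc : ∀ x : L, br z x = 0)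
    (hφ : ∀ i j : ZMod 2, ∀ x ∈ G i, ∀ y ∈ G j,
      φ (x ⊗ₜ[k] y) = α • (br x y ⊗ₜ[k] z) + ((-1 : k) ^ (i.val * j.val)) • (y ⊗ₜ[k] x))
    {j : ZMod 2} {y : L} (hy : y ∈ G j) : φ (z ⊗ₜ y) = y ⊗ₜ z := by
  simp [hφ 0 j z hz0 y hy, hzc]

theorem apply_tmul_central (h : IsLieSuperBracket G br) (hz0 : z ∈ G 0)
    (hzc : ∀ x : L, br z x = 0)
    (hφ : ∀ i j : ZMod 2, ∀ x ∈ G i, ∀ y ∈ G j,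
      φ (x ⊗ₜ[k] y) = α • (br x y ⊗ₜ[k] z) + ((-1 : k) ^ (i.val * j.val)) • (y ⊗ₜ[k] x))
    {i : ZMod 2} {x : L} (hx : x ∈ G i) : φ (x ⊗ₜ z) = z ⊗ₜ x := by
  simp [hφ i 0 x hx z hz0, h.bracket_eq_zero_of_central hz0 hzc hx]

theorem braid_tmul_tmul (h : IsLieSuperBracket G br) (hz0 : z ∈ G 0)
    (hzc : ∀ x : L, br z x = 0)
    (hφ : ∀ i j : ZMod 2, ∀ x ∈ G i, ∀ y ∈ G j,
      φ (x ⊗ₜ[k] y) = α • (br x y ⊗ₜ[k] z) + ((-1 : k) ^ (i.val * j.val)) • (y ⊗ₜ[k] x))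
    {i j l : ZMod 2} {x y t : L} (hx : x ∈ G i) (hy : y ∈ G j) (ht : t ∈ G l) :
    leg12 φ (leg23 φ (leg12 φ (x ⊗ₜ (y ⊗ₜ t)))) =
      leg23 φ (leg12 φ (leg23 φ (x ⊗ₜ (y ⊗ₜ t)))) := by
  have hxy := h.bracket_mem i j x hx y hy
  have hxt := h.bracket_mem i l x hx t ht
  have hyt := h.bracket_mem j l y hy t ht
  simp only [leg12_tmul, leg23_tmul, hφ i j x hx y hy, hφ i l x hx t ht, hφ j l y hy t ht,
    hφ (i + j) l _ hxy t ht, hφ j (i + l) y hy _ hxt, hφ i (j + l) x hx _ hyt,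
    apply_central_tmul hz0 hzc hφ hy, apply_central_tmul hz0 hzc hφ ht,
    apply_central_tmul hz0 hzc hφ hz0, apply_tmul_central h hz0 hzc hφ hx,
    h.bracket_bracket hx hy ht, neg_one_pow_val_add_mul, neg_one_pow_mul_val_add,
    map_add, map_smul, add_tmul, tmul_add, ← smul_tmul', tmul_smul, assoc_tmul, smul_add, smul_smul]
  rw [Nat.mul_comm j.val i.val]
  -- six terms on each side; only the `[x, t] ⊗ y ⊗ z` coefficients differ, by a squared sign
  linear_combination (norm := module)
    neg_one_pow_mul_self (R := k) (i.val * j.val) •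
      (α * (-1) ^ (j.val * l.val)) • (br x t ⊗ₜ[k] (y ⊗ₜ[k] z))

theorem symm_apply_apply_tmul (h : IsLieSuperBracket G br) (hz0 : z ∈ G 0)
    (hzc : ∀ x : L, br z x = 0)
    (hφ : ∀ i j : ZMod 2, ∀ x ∈ G i, ∀ y ∈ G j,
      φ (x ⊗ₜ[k] y) = α • (br x y ⊗ₜ[k] z) + ((-1 : k) ^ (i.val * j.val)) • (y ⊗ₜ[k] x))
    (hψ : ∀ i j : ZMod 2, ∀ x ∈ G i, ∀ y ∈ G j,
      ψ (x ⊗ₜ[k] y) = α • (z ⊗ₜ[k] br x y) + ((-1 : k) ^ (i.val * j.val)) • (y ⊗ₜ[k] x))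
    {i j : ZMod 2} {x y : L} (hx : x ∈ G i) (hy : y ∈ G j) :
    ψ (φ (x ⊗ₜ y)) = x ⊗ₜ y := by
  have hxy := h.bracket_mem i j x hx y hy
  simp only [hφ i j x hx y hy, hψ (i + j) 0 _ hxy z hz0, hψ j i y hy x hx,
    h.bracket_eq_zero_of_central hz0 hzc hxy, h.antisymm j i y hy x hx, map_add, map_smul,
    ZMod.val_zero, mul_zero, pow_zero, one_smul, tmul_zero, smul_zero, zero_add, tmul_neg,
    tmul_smul]
  rw [Nat.mul_comm j.val i.val]
  linear_combination (norm := module) neg_one_pow_mul_self (R := k) (i.val * j.val) •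
    (x ⊗ₜ[k] y - α • (z ⊗ₜ[k] br x y))

theorem apply_symm_apply_tmul (h : IsLieSuperBracket G br) (hz0 : z ∈ G 0)
    (hzc : ∀ x : L, br z x = 0)
    (hφ : ∀ i j : ZMod 2, ∀ x ∈ G i, ∀ y ∈ G j,
      φ (x ⊗ₜ[k] y) = α • (br x y ⊗ₜ[k] z) + ((-1 : k) ^ (i.val * j.val)) • (y ⊗ₜ[k] x))
    (hψ : ∀ i j : ZMod 2, ∀ x ∈ G i, ∀ y ∈ G j,
      ψ (x ⊗ₜ[k] y) = α • (z ⊗ₜ[k] br x y) + ((-1 : k) ^ (i.val * j.val)) • (y ⊗ₜ[k] x))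
    {i j : ZMod 2} {x y : L} (hx : x ∈ G i) (hy : y ∈ G j) :
    φ (ψ (x ⊗ₜ y)) = x ⊗ₜ y := by
  simp only [hψ i j x hx y hy, apply_central_tmul hz0 hzc hφ (h.bracket_mem i j x hx y hy),
    hφ j i y hy x hx, h.antisymm j i y hy x hx, map_add, map_smul, ← smul_tmul', neg_tmul]
  rw [Nat.mul_comm j.val i.val]
  linear_combination (norm := module) neg_one_pow_mul_self (R := k) (i.val * j.val) •
    (x ⊗ₜ[k] y - α • (br x y ⊗ₜ[k] z))

end Braiding

theorem yb_operator_from_lie_superalgebra_general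
    (L : Type*) [AddCommGroup L] [Module k L]
    (G : ZMod 2 → Submodule k L) (hG : DirectSum.IsInternal G)
    (br : L →ₗ[k] L →ₗ[k] L)
    (hgrade : ∀ i j : ZMod 2, ∀ x ∈ G i, ∀ y ∈ G j, br x y ∈ G (i + j))
    (hanti : ∀ i j : ZMod 2, ∀ x ∈ G i, ∀ y ∈ G j,
      br x y = -(((-1 : k) ^ (i.val * j.val)) • br y x))
    (hjacobi : ∀ i j l : ZMod 2, ∀ x ∈ G i, ∀ y ∈ G j, ∀ t ∈ G l,
      ((-1 : k) ^ (l.val * i.val)) • br x (br y t) +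
      ((-1 : k) ^ (i.val * j.val)) • br y (br t x) +
      ((-1 : k) ^ (j.val * l.val)) • br t (br x y) = 0)
    (z : L) (hz0 : z ∈ G 0) (hzc : ∀ x : L, br z x = 0)
    (α : k)
    (φ ψ : L ⊗[k] L →ₗ[k] L ⊗[k] L)
    (hφ : ∀ i j : ZMod 2, ∀ x ∈ G i, ∀ y ∈ G j,
      φ (x ⊗ₜ[k] y) = α • (br x y ⊗ₜ[k] z) + ((-1 : k) ^ (i.val * j.val)) • (y ⊗ₜ[k] x))
    (hψ : ∀ i j : ZMod 2, ∀ x ∈ G i, ∀ y ∈ G j,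
      ψ (x ⊗ₜ[k] y) = α • (z ⊗ₜ[k] br x y) + ((-1 : k) ^ (i.val * j.val)) • (y ⊗ₜ[k] x)) :
    (leg12 φ ∘ₗ leg23 φ ∘ₗ leg12 φ = leg23 φ ∘ₗ leg12 φ ∘ₗ leg23 φ) ∧
    ψ ∘ₗ φ = LinearMap.id ∧ φ ∘ₗ ψ = LinearMap.id := by
  have h : IsLieSuperBracket G br := ⟨hgrade, hanti, hjacobi⟩
  have hG' : iSup G = ⊤ := hG.submodule_iSup_eq_top
  refine ⟨?_, ?_, ?_⟩
  · exact TensorProduct.ext_threefold_of_iSup_eq_top hG' fun _ _ _ _ hx _ hy _ ht =>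
      braid_tmul_tmul h hz0 hzc hφ hx hy ht
  · exact TensorProduct.ext_of_iSup_eq_top hG' hG' fun _ _ _ hx _ hy =>
      symm_apply_apply_tmul h hz0 hzc hφ hψ hx hy
  · exact TensorProduct.ext_of_iSup_eq_top hG' hG' fun _ _ _ hx _ hy =>
      apply_symm_apply_tmul h hz0 hzc hφ hψ hx hy

theorem yb_operator_from_lie_superalgebra
    (hchar : (2 : k) ≠ 0)
    (L : Type*) [AddCommGroup L] [Module k L]
    (G : ZMod 2 → Submodule k L) (hG : DirectSum.IsInternal G)
    (br : L →ₗ[k] L →ₗ[k] L)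
    (hgrade : ∀ i j : ZMod 2, ∀ x ∈ G i, ∀ y ∈ G j, br x y ∈ G (i + j))
    (hanti : ∀ i j : ZMod 2, ∀ x ∈ G i, ∀ y ∈ G j,
      br x y = -(((-1 : k) ^ (i.val * j.val)) • br y x))
    (hjacobi : ∀ i j l : ZMod 2, ∀ x ∈ G i, ∀ y ∈ G j, ∀ t ∈ G l,
      ((-1 : k) ^ (l.val * i.val)) • br x (br y t) +
      ((-1 : k) ^ (i.val * j.val)) • br y (br t x) +
      ((-1 : k) ^ (j.val * l.val)) • br t (br x y) = 0)
    (z : L) (hz0 : z ∈ G 0) (hzc : ∀ x : L, br z x = 0)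
    (α : k)
    (φ ψ : L ⊗[k] L →ₗ[k] L ⊗[k] L)
    (hφ : ∀ i j : ZMod 2, ∀ x ∈ G i, ∀ y ∈ G j,
      φ (x ⊗ₜ[k] y) = α • (br x y ⊗ₜ[k] z) + ((-1 : k) ^ (i.val * j.val)) • (y ⊗ₜ[k] x))
    (hψ : ∀ i j : ZMod 2, ∀ x ∈ G i, ∀ y ∈ G j,
      ψ (x ⊗ₜ[k] y) = α • (z ⊗ₜ[k] br x y) + ((-1 : k) ^ (i.val * j.val)) • (y ⊗ₜ[k] x)) :
    (leg12 φ ∘ₗ leg23 φ ∘ₗ leg12 φ = leg23 φ ∘ₗ leg12 φ ∘ₗ leg23 φ) ∧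
    ψ ∘ₗ φ = LinearMap.id ∧ φ ∘ₗ ψ = LinearMap.id :=
  yb_operator_from_lie_superalgebra_general L G hG br hgrade hanti hjacobi z hz0 hzc α φ ψ hφ hψ
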